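/- arXiv:2408.09166 — 7 statements merged into one kernel-verified Lean document; each statement's English description precedes it below -/
import Mathlib

section
/- Let F(x,y,q,h) = Σ_{n,k≥0} Σ_{π ∈ C_{n,k}} x^n y^k q^{sp(π)} h^{hsp(π)}, a well-defined formal power series in ℚ[[x,y,q,h]] (the coefficient of each monomial is a finite count, since for fixed n there are finitely many compositions of n and sp(π) ≤ n, hsp(π) ≤ n, k ≤ n). For each integer a ≥ 1 let A_a = 1 − y²·x^{2a+1}·(q·h·(1−hx)^{−1} − (1−x)^{−1}) ∈ ℚ[[x,y,q,h]]; A_a has constant term 1 and is therefore invertible. Then F · (1 − Σ_{a≥1} x^a·y·A_a^{−1}) = 1, where Σ_{a≥1} x^a·y·A_a^{−1} is a well-defined power series because the a-th summand has x-adic order at least a. Equivalently, F(x,y,q,h) = 1/(1 − Σ_{a≥1} x^a y/(1 − y²x^{2a+1}(qh/(1−hx) − 1/(1−x)))). -/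
/-- The indices (0-based) of symmetric peaks of a list of naturals:
`i` is a symmetric peak if `L i < L (i+1)` and `L i = L (i+2)`. -/
def symPeakIdx (L : List ℕ) : Finset ℕ :=
  (Finset.range L.length).filter (fun i =>
    i + 2 < L.length ∧ L.getD i 0 < L.getD (i+1) 0 ∧ L.getD i 0 = L.getD (i+2) 0)

/-- `sp π`: the number of symmetric peaks of `π`. -/
def spL (L : List ℕ) : ℕ := (symPeakIdx L).card

/-- `hsp π`: the sum of the heights of the symmetric peaks of `π`. -/
def hspL (L : List ℕ) : ℕ := ∑ i ∈ symPeakIdx L, (L.getD (i+1) 0 - L.getD i 0)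

/-- Variables: `X 0 = x`, `X 1 = y`, `X 2 = q`, `X 3 = h`. -/
noncomputable abbrev Xv : Fin 4 → MvPowerSeries (Fin 4) ℚ := MvPowerSeries.X

/-- `F(x,y,q,h) = Σ_{n,k≥0} Σ_{π ∈ C_{n,k}} x^n y^k q^{sp(π)} h^{hsp(π)}`, defined
coefficientwise: the coefficient of `x^n y^k q^s h^t` is the number of compositions of `n`
with `k` parts, `s` symmetric peaks, and total symmetric-peak height `t`. -/
noncomputable def Fhsp : MvPowerSeries (Fin 4) ℚ := fun m =>
  ((Finset.univ : Finset (Composition (m 0))).filter (fun c =>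
    c.length = m 1 ∧ spL c.blocks = m 2 ∧ hspL c.blocks = m 3)).card

/-- `A_a = 1 − y²·x^{2a+1}·(q·h·(1−hx)⁻¹ − (1−x)⁻¹)`. -/
noncomputable def Ahsp (a : ℕ) : MvPowerSeries (Fin 4) ℚ :=
  1 - (Xv 1)^2 * (Xv 0)^(2*a+1) *
    (Xv 2 * Xv 3 * (1 - Xv 3 * Xv 0)⁻¹ - (1 - Xv 0)⁻¹)

/-- `Σ_{a≥1} x^a·y·A_a⁻¹`, defined coefficientwise: since the `a`-th summand has `x`-adic
order at least `a`, only the terms with `1 ≤ a ≤ m 0` contribute to the coefficient of a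
monomial `m`. -/
noncomputable def Shsp : MvPowerSeries (Fin 4) ℚ := fun m =>
  ∑ a ∈ Finset.Icc 1 (m 0), MvPowerSeries.coeff m ((Xv 0)^a * Xv 1 * (Ahsp a)⁻¹)

/-!
Split the compositions by their first part: `F = 1 + Σ_{a ≥ 1} F_a`. Prepending `a` to a
composition `σ` adds no symmetric peak unless `σ = b :: a :: τ` with `b > a`, in which case it adds
one of height `b - a`. Hence `F_a = x^a y (F - K_a) + P_a`, where `K_a` counts the compositions
`b :: a :: τ` and `P_a` those of the form `a :: b :: a :: τ` (both with `b > a`). Raising `b` by one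
is a bijection from these classes onto their members with `b > a + 1`, and it multiplies the weight
by `x`, resp. `x h`; the members with `b = a + 1` are counted by `x^(a+1) y F_a`, resp.
`q h x^(2a+1) y² F_a`. So `K_a = x^(a+1) y F_a / (1 - x)` and `P_a = q h x^(2a+1) y² F_a / (1 - h x)`,
which turns the equation for `F_a` into `A_a F_a = x^a y F`, and `F = 1 + F · Σ_a x^a y / A_a`.
-/

open Finset MvPowerSeries

namespace MvPowerSeries

variable {σ R : Type*} [CommSemiring R]

lemma monomial_add_one (d e : σ →₀ ℕ) :
    (monomial (d + e) 1 : MvPowerSeries σ R) = monomial d 1 * monomial e 1 := by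
  rw [monomial_mul_monomial, one_mul]

lemma coeff_X_pow_mul_of_lt {m : σ →₀ ℕ} {s : σ} {n : ℕ} (h : m s < n) (φ : MvPowerSeries σ R) :
    coeff m (X s ^ n * φ) = 0 := by
  rw [X_pow_eq, coeff_monomial_mul, if_neg (by rwa [Finsupp.single_le_iff, not_le])]

lemma coeff_mul_congr_right {m : σ →₀ ℕ} (f : MvPowerSeries σ R) {g g' : MvPowerSeries σ R}
    (h : ∀ p ≤ m, coeff p g = coeff p g') : coeff m (f * g) = coeff m (f * g') := by
  classical
  rw [coeff_mul, coeff_mul]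
  refine sum_congr rfl fun p hp => ?_
  rw [h p.2 (mem_antidiagonal.1 hp ▸ le_add_self)]

end MvPowerSeries

namespace SymPeak

/-- `a :: L` starts with a symmetric peak. -/
def PeakAfter (a : ℕ) (L : List ℕ) : Prop := ∃ b τ, a < b ∧ L = b :: a :: τ

lemma not_peakAfter_cons_of_le {a c : ℕ} {τ : List ℕ} (h : c ≤ a) : ¬ PeakAfter a (c :: τ) := by
  rintro ⟨b, σ, hab, hL⟩
  simp only [List.cons.injEq] at hL
  omega

lemma mem_symPeakIdx {L : List ℕ} {i : ℕ} : i ∈ symPeakIdx L ↔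
    i + 2 < L.length ∧ L.getD i 0 < L.getD (i + 1) 0 ∧ L.getD i 0 = L.getD (i + 2) 0 := by
  simp only [symPeakIdx, mem_filter, mem_range, and_iff_right_iff_imp]
  omega

open Classical in
lemma symPeakIdx_cons (c : ℕ) (L : List ℕ) :
    symPeakIdx (c :: L) = (if PeakAfter c L then insert 0 else id)
      ((symPeakIdx L).map (addRightEmbedding 1)) := by
  ext (_ | i)
  · rcases L with _ | ⟨b, _ | ⟨d, τ⟩⟩ <;> split_ifs <;>
      simp_all [mem_symPeakIdx, PeakAfter, eq_comm]; omega
  · split_ifs <;> (simp [mem_symPeakIdx]; omega)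

open Classical in
lemma spL_cons (c : ℕ) (L : List ℕ) :
    spL (c :: L) = spL L + if PeakAfter c L then 1 else 0 := by
  rw [spL, spL, symPeakIdx_cons]
  split_ifs <;> simp

open Classical in
lemma hspL_cons (c : ℕ) (L : List ℕ) :
    hspL (c :: L) = hspL L + if PeakAfter c L then L.headD 0 - c else 0 := by
  rw [hspL, hspL, symPeakIdx_cons]
  split_ifs with h
  · obtain ⟨b, τ, -, rfl⟩ := h
    simp [add_comm]
  · simp

/-- The exponent of `x^(Σ L) y^|L| q^(sp L) h^(hsp L)`. -/
noncomputable def exponent (L : List ℕ) : Fin 4 →₀ ℕ :=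
  .single 0 L.sum + .single 1 L.length + .single 2 (spL L) + .single 3 (hspL L)

lemma exponent_apply_zero (L : List ℕ) : exponent L 0 = L.sum := by
  simp [exponent]

lemma exponent_eq_iff {L : List ℕ} {m : Fin 4 →₀ ℕ} :
    exponent L = m ↔ L.sum = m 0 ∧ L.length = m 1 ∧ spL L = m 2 ∧ hspL L = m 3 := by
  simp [exponent, Finsupp.ext_iff, Fin.forall_fin_succ, eq_comm]

lemma exponent_eq_zero_iff {L : List ℕ} : exponent L = 0 ↔ L = [] := by
  refine ⟨fun h => List.length_eq_zero_iff.1 (exponent_eq_iff.1 h).2.1, ?_⟩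
  rintro rfl
  simp [exponent_eq_iff, spL, hspL, symPeakIdx]

lemma exponent_cons_of_not_peakAfter {c : ℕ} {L : List ℕ} (h : ¬ PeakAfter c L) :
    exponent (c :: L) = exponent L + (.single 0 c + .single 1 1) := by
  classical
  simp only [exponent, spL_cons, hspL_cons, if_neg h, List.sum_cons, List.length_cons,
    Finsupp.single_add, Finsupp.single_zero]
  abel

lemma exponent_cons_of_peakAfter {c : ℕ} {L : List ℕ} (h : PeakAfter c L) :
    exponent (c :: L) =
      exponent L + (.single 0 c + .single 1 1 + .single 2 1 + .single 3 (L.headD 0 - c)) := by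
  classical
  simp only [exponent, spL_cons, hspL_cons, if_pos h, List.sum_cons, List.length_cons,
    Finsupp.single_add]
  abel

lemma exponent_succ_cons {b : ℕ} {L : List ℕ} (h : ¬ PeakAfter b L) (h' : ¬ PeakAfter (b + 1) L) :
    exponent ((b + 1) :: L) = exponent (b :: L) + .single 0 1 := by
  rw [exponent_cons_of_not_peakAfter h, exponent_cons_of_not_peakAfter h', Finsupp.single_add]
  abel

lemma exponent_peak {a b : ℕ} (τ : List ℕ) (hab : a < b) :
    exponent (a :: b :: a :: τ) =
      exponent (a :: τ) + (.single 0 (a + b) + .single 1 2 + .single 2 1 + .single 3 (b - a)) := by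
  rw [exponent_cons_of_peakAfter ⟨b, τ, hab, rfl⟩,
    exponent_cons_of_not_peakAfter (not_peakAfter_cons_of_le hab.le), List.headD_cons,
    Finsupp.single_add, show (2 : ℕ) = 1 + 1 from rfl, Finsupp.single_add]
  abel

def compList (n : ℕ) : Finset (List ℕ) :=
  (univ : Finset (Composition n)).map ⟨Composition.blocks, fun _ _ => Composition.ext⟩

lemma mem_compList {n : ℕ} {L : List ℕ} : L ∈ compList n ↔ (∀ i ∈ L, 0 < i) ∧ L.sum = n := by
  refine ⟨fun hL => ?_, fun ⟨hpos, hsum⟩ => mem_map.2 ⟨⟨L, hpos _, hsum⟩, mem_univ _, rfl⟩⟩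
  obtain ⟨c, -, rfl⟩ := mem_map.1 hL
  exact ⟨fun _ => c.blocks_pos, c.blocks_sum⟩

open Classical in
noncomputable def series (P : List ℕ → Prop) : MvPowerSeries (Fin 4) ℚ :=
  fun m => #{L ∈ compList (m 0) | P L ∧ exponent L = m}

variable {P Q R : List ℕ → Prop}

lemma coeff_series [DecidablePred P] (m : Fin 4 →₀ ℕ) :
    coeff m (series P) = #{L ∈ compList (m 0) | P L ∧ exponent L = m} := by
  classical
  simp only [series, coeff_apply]
  congr

lemma mem_seriesFilter [DecidablePred P] {m : Fin 4 →₀ ℕ} {L : List ℕ} :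
    L ∈ {L ∈ compList (m 0) | P L ∧ exponent L = m} ↔
      (∀ i ∈ L, 0 < i) ∧ P L ∧ exponent L = m := by
  simp only [mem_filter, mem_compList]
  constructor
  · rintro ⟨⟨hpos, -⟩, hP, he⟩
    exact ⟨hpos, hP, he⟩
  · rintro ⟨hpos, hP, rfl⟩
    exact ⟨⟨hpos, (exponent_apply_zero L).symm⟩, hP, rfl⟩

lemma series_eq_add (hP : ∀ L, P L ↔ Q L ∨ R L) (hQR : ∀ L, Q L → ¬ R L) :
    series P = series Q + series R := by
  classical
  ext m
  rw [map_add, coeff_series, coeff_series, coeff_series, ← Nat.cast_add,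
    ← card_union_of_disjoint]
  · congr 2
    ext L
    simp only [mem_union, mem_seriesFilter, hP]
    tauto
  · exact disjoint_left.2 fun L hQ hR =>
      hQR L (mem_seriesFilter.1 hQ).2.1 (mem_seriesFilter.1 hR).2.1

lemma series_eq_monomial_mul (f : List ℕ → List ℕ) (d : Fin 4 →₀ ℕ)
    (hf : ∀ σ, (∀ i ∈ σ, 0 < i) → P σ →
      (∀ i ∈ f σ, 0 < i) ∧ Q (f σ) ∧ exponent (f σ) = exponent σ + d)
    (hQ : ∀ L, (∀ i ∈ L, 0 < i) → Q L → ∃ σ, (∀ i ∈ σ, 0 < i) ∧ P σ ∧ f σ = L)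
    (hinj : Set.InjOn f {σ | P σ}) :
    series Q = monomial d 1 * series P := by
  classical
  ext m
  rw [coeff_monomial_mul, coeff_series]
  split_ifs with hdm
  · rw [one_mul, coeff_series]
    refine congrArg Nat.cast (Eq.trans (congrArg card ?_) (card_image_of_injOn fun σ hσ τ hτ =>
      hinj (mem_seriesFilter.1 hσ).2.1 (mem_seriesFilter.1 hτ).2.1))
    ext L
    simp only [mem_image, mem_seriesFilter]
    constructor
    · rintro ⟨hpos, hQL, rfl⟩
      obtain ⟨σ, hσ, hPσ, rfl⟩ := hQ L hpos hQL
      exact ⟨σ, ⟨hσ, hPσ, eq_tsub_of_add_eq (hf σ hσ hPσ).2.2.symm⟩, rfl⟩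
    · rintro ⟨σ, ⟨hσ, hPσ, he⟩, rfl⟩
      obtain ⟨hpos, hQσ, hfe⟩ := hf σ hσ hPσ
      exact ⟨hpos, hQσ, by rw [hfe, he, tsub_add_cancel_of_le hdm]⟩
  · rw [Nat.cast_eq_zero, card_eq_zero, filter_eq_empty_iff]
    rintro L hL ⟨hQL, rfl⟩
    obtain ⟨σ, hσ, hPσ, rfl⟩ := hQ L (mem_compList.1 hL).1 hQL
    exact hdm ((hf σ hσ hPσ).2.2 ▸ le_add_self)

lemma series_split_succ (a : ℕ) (g : ℕ → List ℕ → List ℕ)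
    (hg : ∀ b b' τ τ', g b τ = g b' τ' → b = b') :
    (series fun L => ∃ b τ, a < b ∧ L = g b τ) =
      (series fun L => ∃ τ, L = g (a + 1) τ) + series fun L => ∃ b τ, a + 1 < b ∧ L = g b τ := by
  refine series_eq_add (fun L => ⟨?_, ?_⟩) ?_
  · rintro ⟨b, τ, hab, rfl⟩
    rcases (Nat.succ_le_of_lt hab).eq_or_lt with rfl | hab
    · exact Or.inl ⟨τ, rfl⟩
    · exact Or.inr ⟨b, τ, hab, rfl⟩
  · rintro (⟨τ, rfl⟩ | ⟨b, τ, hab, rfl⟩)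
    · exact ⟨a + 1, τ, a.lt_succ_self, rfl⟩
    · exact ⟨b, τ, by omega, rfl⟩
  · rintro L ⟨τ, rfl⟩ ⟨b, σ, hab, hL⟩
    have := hg _ _ _ _ hL
    omega

lemma Fhsp_eq_series : Fhsp = series fun _ => True := by
  classical
  ext m
  rw [coeff_series, compList, filter_map, card_map]
  simp only [Fhsp, coeff_apply]
  congr 3
  ext c
  change _ ↔ True ∧ exponent c.blocks = m
  rw [true_and, exponent_eq_iff, c.blocks_length, c.blocks_sum]
  exact (and_iff_right rfl).symm

noncomputable def headSeries (a : ℕ) : MvPowerSeries (Fin 4) ℚ :=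
  series fun L => ∃ τ, L = a :: τ

lemma coeff_series_nil (m : Fin 4 →₀ ℕ) :
    coeff m (series (· = [])) = if m = 0 then 1 else 0 := by
  classical
  rw [coeff_series]
  split_ifs with hm
  · subst hm
    rw [Nat.cast_eq_one, card_eq_one]
    refine ⟨[], eq_singleton_iff_unique_mem.2 ⟨mem_seriesFilter.2 ?_, fun L hL => ?_⟩⟩
    · simp [exponent_eq_zero_iff]
    · exact (mem_seriesFilter.1 hL).2.1
  · rw [Nat.cast_eq_zero, card_eq_zero, filter_eq_empty_iff]
    rintro L - ⟨rfl, rfl⟩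
    exact hm (exponent_eq_zero_iff.2 rfl)

lemma coeff_series_ne_nil (m : Fin 4 →₀ ℕ) :
    coeff m (series (· ≠ [])) = ∑ a ∈ Icc 1 (m 0), coeff m (headSeries a) := by
  classical
  rw [coeff_series, card_eq_sum_card_fiberwise (f := fun L => L.headD 0) (t := Icc 1 (m 0))]
  · push_cast
    refine sum_congr rfl fun a _ => ?_
    rw [headSeries, coeff_series]
    congr 2
    ext L
    rw [mem_filter, mem_seriesFilter, mem_seriesFilter]
    rcases L with _ | ⟨b, τ⟩ <;> simp [eq_comm]
    tauto
  · intro L hL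
    obtain ⟨hpos, hne, hL⟩ := mem_seriesFilter.1 hL
    obtain ⟨b, τ, rfl⟩ := List.exists_cons_of_ne_nil hne
    have hb := hpos b List.mem_cons_self
    have hsum := congrArg (· 0) hL
    simp only [exponent_apply_zero, List.sum_cons] at hsum
    simp only [List.headD_cons, coe_Icc, Set.mem_Icc]
    omega

lemma coeff_series_true (m : Fin 4 →₀ ℕ) :
    coeff m (series fun _ => True) =
      (if m = 0 then 1 else 0) + ∑ a ∈ Icc 1 (m 0), coeff m (headSeries a) := by
  rw [series_eq_add (Q := (· = [])) (R := (· ≠ [])) (fun L => by tauto) (fun L h h' => h' h),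
    map_add, coeff_series_nil, coeff_series_ne_nil]

lemma headSeries_eq {a : ℕ} (ha : 0 < a) :
    headSeries a = Xv 0 ^ a * Xv 1 * (series (fun _ => True) - series (PeakAfter a)) +
      series fun L => ∃ b τ, a < b ∧ L = a :: b :: a :: τ := by
  have hsplit : headSeries a = series (fun L => ∃ σ, L = a :: σ ∧ ¬ PeakAfter a σ) +
      series fun L => ∃ b τ, a < b ∧ L = a :: b :: a :: τ := by
    refine series_eq_add (fun L => ⟨?_, ?_⟩) ?_
    · rintro ⟨σ, rfl⟩
      by_cases h : PeakAfter a σ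
      · obtain ⟨b, τ, hab, rfl⟩ := h
        exact Or.inr ⟨b, τ, hab, rfl⟩
      · exact Or.inl ⟨σ, rfl, h⟩
    · rintro (⟨σ, rfl, -⟩ | ⟨b, τ, -, rfl⟩) <;> exact ⟨_, rfl⟩
    · rintro L ⟨σ, rfl, hσ⟩ ⟨b, τ, hab, hL⟩
      exact hσ ⟨b, τ, hab, (List.cons.inj hL).2⟩
  have hcons : series (fun L => ∃ σ, L = a :: σ ∧ ¬ PeakAfter a σ) =
      Xv 0 ^ a * Xv 1 * series (¬ PeakAfter a ·) := by
    rw [series_eq_monomial_mul (P := (¬ PeakAfter a ·)) (List.cons a) (.single 0 a + .single 1 1)]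
    · simp only [monomial_add_one, ← X_pow_eq, pow_one]
    · intro σ hσ hP
      exact ⟨List.forall_mem_cons.2 ⟨ha, hσ⟩, ⟨σ, rfl, hP⟩, exponent_cons_of_not_peakAfter hP⟩
    · rintro L hL ⟨σ, rfl, hσ⟩
      exact ⟨σ, (List.forall_mem_cons.1 hL).2, hσ, rfl⟩
    · exact List.cons_injective.injOn
  have htotal : series (fun _ => True) = series (PeakAfter a) + series (¬ PeakAfter a ·) :=
    series_eq_add (fun L => by tauto) (fun L h h' => h' h)
  rw [hsplit, hcons, htotal]
  ring

lemma series_peakAfter_eq {a : ℕ} :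
    series (PeakAfter a) = Xv 0 ^ (a + 1) * Xv 1 * headSeries a + Xv 0 * series (PeakAfter a) := by
  have hcons : series (fun L => ∃ τ, L = (a + 1) :: a :: τ) =
      Xv 0 ^ (a + 1) * Xv 1 * headSeries a := by
    rw [headSeries, series_eq_monomial_mul (P := fun L => ∃ τ, L = a :: τ) (List.cons (a + 1))
      (.single 0 (a + 1) + .single 1 1)]
    · simp only [monomial_add_one, ← X_pow_eq, pow_one]
    · rintro σ hσ ⟨τ, rfl⟩
      exact ⟨List.forall_mem_cons.2 ⟨a.succ_pos, hσ⟩, ⟨τ, rfl⟩,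
        exponent_cons_of_not_peakAfter (not_peakAfter_cons_of_le a.le_succ)⟩
    · rintro L hL ⟨τ, rfl⟩
      exact ⟨a :: τ, (List.forall_mem_cons.1 hL).2, ⟨τ, rfl⟩, rfl⟩
    · exact List.cons_injective.injOn
  have hincr : series (fun L => ∃ b τ, a + 1 < b ∧ L = b :: a :: τ) =
      Xv 0 * series (PeakAfter a) := by
    rw [series_eq_monomial_mul (P := PeakAfter a) (·.modify 0 (· + 1)) (.single 0 1)]
    · rw [← X_def]
    · rintro σ hσ ⟨b, τ, hab, rfl⟩
      simp only [List.forall_mem_cons] at hσ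
      refine ⟨by simpa only [List.modify_zero_cons, List.forall_mem_cons] using ⟨b.succ_pos, hσ.2⟩,
        ⟨b + 1, τ, by omega, rfl⟩, ?_⟩
      exact exponent_succ_cons (not_peakAfter_cons_of_le hab.le)
        (not_peakAfter_cons_of_le (by omega))
    · rintro L hL ⟨b, τ, hab, rfl⟩
      refine ⟨(b - 1) :: a :: τ, List.forall_mem_cons.2 ⟨by omega, (List.forall_mem_cons.1 hL).2⟩,
        ⟨b - 1, τ, by omega, rfl⟩, ?_⟩
      rw [List.modify_zero_cons, Nat.sub_add_cancel (by omega)]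
    · rintro _ ⟨b, τ, -, rfl⟩ _ ⟨b', τ', -, rfl⟩ h
      simpa using h
  rw [← hcons, ← hincr]
  exact series_split_succ a (fun b τ => b :: a :: τ) fun _ _ _ _ h => (List.cons.inj h).1

lemma series_headPeak_eq {a : ℕ} (ha : 0 < a) :
    (series fun L => ∃ b τ, a < b ∧ L = a :: b :: a :: τ) =
      Xv 0 ^ (2 * a + 1) * Xv 1 ^ 2 * Xv 2 * Xv 3 * headSeries a +
        Xv 0 * Xv 3 * series fun L => ∃ b τ, a < b ∧ L = a :: b :: a :: τ := by
  have hcons : (series fun L => ∃ τ, L = a :: (a + 1) :: a :: τ) =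
      Xv 0 ^ (2 * a + 1) * Xv 1 ^ 2 * Xv 2 * Xv 3 * headSeries a := by
    rw [headSeries, series_eq_monomial_mul (P := fun L => ∃ τ, L = a :: τ)
      (fun σ => a :: (a + 1) :: σ)
      (.single 0 (a + (a + 1)) + .single 1 2 + .single 2 1 + .single 3 (a + 1 - a))]
    · simp only [monomial_add_one, ← X_pow_eq, pow_one, Nat.add_sub_cancel_left]
      ring
    · rintro σ hσ ⟨τ, rfl⟩
      exact ⟨List.forall_mem_cons.2 ⟨ha, List.forall_mem_cons.2 ⟨a.succ_pos, hσ⟩⟩, ⟨τ, rfl⟩,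
        exponent_peak τ a.lt_succ_self⟩
    · rintro L hL ⟨τ, rfl⟩
      exact ⟨a :: τ, (List.forall_mem_cons.1 (List.forall_mem_cons.1 hL).2).2, ⟨τ, rfl⟩, rfl⟩
    · intro σ _ σ' _ h
      simpa using h
  have hincr : (series fun L => ∃ b τ, a + 1 < b ∧ L = a :: b :: a :: τ) =
      Xv 0 * Xv 3 * series fun L => ∃ b τ, a < b ∧ L = a :: b :: a :: τ := by
    rw [series_eq_monomial_mul (P := fun L => ∃ b τ, a < b ∧ L = a :: b :: a :: τ)
      (·.modify 1 (· + 1)) (.single 0 1 + .single 3 1)]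
    · simp only [monomial_add_one, ← X_def]
    · rintro σ hσ ⟨b, τ, hab, rfl⟩
      simp only [List.forall_mem_cons] at hσ
      refine ⟨by simpa only [List.modify_succ_cons, List.modify_zero_cons, List.forall_mem_cons]
        using ⟨ha, b.succ_pos, hσ.2.2⟩, ⟨b + 1, τ, by omega, rfl⟩, ?_⟩
      rw [List.modify_succ_cons, List.modify_zero_cons, exponent_peak τ hab,
        exponent_peak τ (by omega), show b + 1 - a = b - a + 1 by omega, ← add_assoc a b 1]
      simp only [Finsupp.single_add]
      abel
    · rintro L hL ⟨b, τ, hab, rfl⟩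
      obtain ⟨-, hL⟩ := List.forall_mem_cons.1 hL
      refine ⟨a :: (b - 1) :: a :: τ, List.forall_mem_cons.2
          ⟨ha, List.forall_mem_cons.2 ⟨by omega, (List.forall_mem_cons.1 hL).2⟩⟩,
        ⟨b - 1, τ, by omega, rfl⟩, ?_⟩
      rw [List.modify_succ_cons, List.modify_zero_cons, Nat.sub_add_cancel (by omega)]
    · rintro _ ⟨b, τ, -, rfl⟩ _ ⟨b', τ', -, rfl⟩ h
      simpa using h
  rw [← hcons, ← hincr]
  exact series_split_succ a (fun b τ => a :: b :: a :: τ) fun _ _ _ _ h =>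
    (List.cons.inj (List.cons.inj h).2).1

lemma Ahsp_mul_headSeries {a : ℕ} (ha : 0 < a) :
    Ahsp a * headSeries a = Xv 0 ^ a * Xv 1 * Fhsp := by
  have hx : (1 - Xv 0) * (1 - Xv 0)⁻¹ = 1 := MvPowerSeries.mul_inv_cancel _ (by simp)
  have hhx : (1 - Xv 3 * Xv 0) * (1 - Xv 3 * Xv 0)⁻¹ = 1 :=
    MvPowerSeries.mul_inv_cancel _ (by simp)
  rw [Ahsp, Fhsp_eq_series]
  linear_combination headSeries_eq ha - Xv 0 ^ a * Xv 1 * (1 - Xv 0)⁻¹ * series_peakAfter_eq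
    + Xv 0 ^ a * Xv 1 * series (PeakAfter a) * hx
    + (1 - Xv 3 * Xv 0)⁻¹ * series_headPeak_eq ha
    - (series fun L => ∃ b τ, a < b ∧ L = a :: b :: a :: τ) * hhx

lemma headSeries_eq_mul {a : ℕ} (ha : 0 < a) :
    headSeries a = Fhsp * (Xv 0 ^ a * Xv 1 * (Ahsp a)⁻¹) := by
  have hA : Ahsp a * (Ahsp a)⁻¹ = 1 := MvPowerSeries.mul_inv_cancel _ (by simp [Ahsp])
  linear_combination (Ahsp a)⁻¹ * Ahsp_mul_headSeries ha - headSeries a * hA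

end SymPeak

open SymPeak

lemma coeff_Shsp {m : Fin 4 →₀ ℕ} {N : ℕ} (hN : m 0 ≤ N) :
    coeff m Shsp = coeff m (∑ a ∈ Icc 1 N, Xv 0 ^ a * Xv 1 * (Ahsp a)⁻¹) := by
  rw [map_sum]
  refine sum_subset (Icc_subset_Icc_right hN) fun a ha ha' => ?_
  rw [mul_assoc, coeff_X_pow_mul_of_lt]
  simp only [mem_Icc] at ha ha'
  omega

/-- Theorem 1 of the paper: `F·(1 − Σ_{a≥1} x^a y A_a⁻¹) = 1`, i.e.
`F(x,y,q,h) = 1/(1 − Σ_{a≥1} x^a y/(1 − y²x^{2a+1}(qh/(1−hx) − 1/(1−x))))`. -/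
theorem hsp_generating_function : Fhsp * (1 - Shsp) = 1 := by
  ext m
  have hS : coeff m (Fhsp * Shsp) = ∑ a ∈ Icc 1 (m 0), coeff m (headSeries a) := by
    rw [coeff_mul_congr_right _ fun p hp => coeff_Shsp (hp 0), mul_sum, map_sum]
    exact sum_congr rfl fun a ha => by rw [headSeries_eq_mul (mem_Icc.1 ha).1]
  rw [mul_sub, mul_one, map_sub, hS, Fhsp_eq_series, coeff_series_true, coeff_one]
  ring
end

section
/- In the ring of formal power series ℚ[[x]], one has (1−2x)²·(1−x³)·(Σ_{n≥0} hsp(n)·xⁿ) = x⁴. -/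
/-- `hsp(n)`: the total sum of heights of symmetric peaks over all compositions of `n`. -/
def hspN (n : ℕ) : ℕ := ∑ c : Composition n, hspL c.blocks

namespace Composition

open Finset

variable {M : Type*} [AddCommMonoid M]

theorem sum_blocks_zero (f : List ℕ → M) : ∑ c : Composition 0, f c.blocks = f [] := by
  have hnil (c : Composition 0) : c.blocks = [] := by simp
  simp [hnil, composition_card]

theorem sum_blocks_succ (n : ℕ) (f : List ℕ → M) :
    ∑ c : Composition (n + 1), f c.blocks =
      ∑ p ∈ antidiagonal n, ∑ c : Composition p.2, f ((p.1 + 1) :: c.blocks) := by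
  have hcons (c : Composition (n + 1)) : c.blocks = (c.blocks.headI - 1 + 1) :: c.blocks.tail := by
    obtain ⟨_ | ⟨b, L⟩, hpos, hsum⟩ := c
    · simp at hsum
    · simpa using (Nat.sub_add_cancel (hpos List.mem_cons_self)).symm
  rw [sum_sigma']
  refine sum_bij'
    (fun c _ => ⟨(c.blocks.headI - 1, c.blocks.tail.sum),
      ⟨c.blocks.tail, fun h => c.blocks_pos (List.mem_of_mem_tail h), rfl⟩⟩)
    (fun x hx => ⟨(x.1.1 + 1) :: x.2.blocks, ?_, ?_⟩) ?_ (fun _ _ => mem_univ _) ?_ ?_ ?_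
  · exact fun h => (List.mem_cons.mp h).elim (fun e => e ▸ Nat.succ_pos _) x.2.blocks_pos
  · have := mem_antidiagonal.mp (mem_sigma.mp hx).1
    simp only [List.sum_cons, x.2.blocks_sum]
    omega
  · intro c _
    have := congrArg List.sum (hcons c)
    simp only [List.sum_cons, c.blocks_sum] at this
    simp only [mem_sigma, HasAntidiagonal.mem_antidiagonal, mem_univ, and_true]
    omega
  · exact fun c _ => Composition.ext (hcons c).symm
  · rintro ⟨⟨i, m⟩, ⟨L, hpos, hsum⟩⟩ -
    simp only at hsum
    subst hsum
    rfl
  · exact fun c _ => congrArg f (hcons c)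

end Composition

section PeakSums

open Finset Composition

def headPeakHeight (a : ℕ) : List ℕ → ℕ
  | b :: c :: _ => if a < b ∧ a = c then b - a else 0
  | _ => 0

theorem headPeakHeight_cons (a b : ℕ) (L : List ℕ) :
    headPeakHeight a (b :: L) = (b - a) * if L.head? = some a then 1 else 0 := by
  rcases L with _ | ⟨c, L⟩
  · simp [headPeakHeight]
  · simp only [headPeakHeight, List.head?_cons, Option.some.injEq]
    split_ifs <;> omega

theorem hspL_cons (a : ℕ) (L : List ℕ) : hspL (a :: L) = headPeakHeight a L + hspL L := by
  simp only [hspL, symPeakIdx, sum_filter, List.length_cons, sum_range_succ',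
    List.getD_cons_succ, List.getD_cons_zero]
  rw [add_comm (headPeakHeight a L)]
  congr 1
  · refine sum_congr rfl fun i _ => ?_
    simp only [add_assoc, Nat.reduceAdd, show i + 3 < L.length + 1 ↔ i + 2 < L.length by omega]
  · rcases L with _ | ⟨b, _ | ⟨c, L⟩⟩ <;> simp [headPeakHeight]

def headCount (a k : ℕ) : ℕ := #{c : Composition k | c.blocks.head? = some a}

theorem headCount_zero (a : ℕ) : headCount a 0 = 0 := by
  rw [headCount, card_filter,
    sum_blocks_zero (fun L : List ℕ => if L.head? = some a then 1 else 0)]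
  simp

theorem headCount_succ_succ (a k : ℕ) :
    headCount (a + 1) (k + 1) = if a ≤ k then Fintype.card (Composition (k - a)) else 0 := by
  rw [headCount, card_filter,
    sum_blocks_succ k (fun L : List ℕ => if L.head? = some (a + 1) then 1 else 0)]
  simp [Nat.sum_antidiagonal_eq_sum_range_succ_mk]

theorem headCount_add_two_succ (a k : ℕ) : headCount (a + 2) (k + 1) = headCount (a + 1) k := by
  rcases k with _ | k
  · simp [headCount_succ_succ, headCount_zero]
  · simp [headCount_succ_succ]

theorem headCount_one_succ (k : ℕ) : headCount 1 (k + 1) = Fintype.card (Composition k) := by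
  simp [headCount_succ_succ]

def headPeakSum (a m : ℕ) : ℕ := ∑ c : Composition m, headPeakHeight a c.blocks

theorem headPeakSum_zero (a : ℕ) : headPeakSum a 0 = 0 :=
  sum_blocks_zero (headPeakHeight a)

-- The truncated `p.1 + 1 - a` vanishes when the entry after `a` is not above it.
theorem headPeakSum_succ (a m : ℕ) :
    headPeakSum a (m + 1) = ∑ p ∈ antidiagonal m, (p.1 + 1 - a) * headCount a p.2 := by
  rw [headPeakSum, sum_blocks_succ]
  refine sum_congr rfl fun p _ => ?_
  simp only [headPeakHeight_cons, ← mul_sum, headCount, card_filter]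

theorem headPeakSum_add_two_one (a : ℕ) : headPeakSum (a + 2) 1 = 0 := by
  simp [headPeakSum_succ]

theorem headPeakSum_add_two_add_two (a m : ℕ) :
    headPeakSum (a + 2) (m + 2) = headPeakSum (a + 1) m := by
  rcases m with _ | m
  · simp [headPeakSum_succ, Nat.sum_antidiagonal_succ, headCount_zero, headPeakSum_zero]
  · rw [show m + 1 + 2 = m + 2 + 1 by ring, headPeakSum_succ, headPeakSum_succ,
      Nat.sum_antidiagonal_succ, Nat.sum_antidiagonal_succ']
    simp [headCount_zero, headCount_add_two_succ]

-- Summed over the compositions `(p.1 + 1) :: c` of `n + 1`.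
def headPeakTotal (n : ℕ) : ℕ := ∑ p ∈ antidiagonal n, headPeakSum (p.1 + 1) p.2

theorem headPeakTotal_add_three (n : ℕ) :
    headPeakTotal (n + 3) = headPeakSum 1 (n + 3) + headPeakTotal n := by
  rw [headPeakTotal, Nat.sum_antidiagonal_succ, Nat.sum_antidiagonal_succ',
    Nat.sum_antidiagonal_succ']
  simp [headPeakSum_zero, headPeakSum_add_two_one, headPeakSum_add_two_add_two, headPeakTotal]

theorem headPeakTotal_of_lt_three {n : ℕ} (hn : n < 3) : headPeakTotal n = headPeakSum 1 n := by
  interval_cases n <;>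
    simp [headPeakTotal, Nat.sum_antidiagonal_succ, headPeakSum_zero, headPeakSum_add_two_one]

theorem hspN_zero : hspN 0 = 0 :=
  sum_blocks_zero hspL

theorem hspN_succ (n : ℕ) :
    hspN (n + 1) = headPeakTotal n + ∑ p ∈ antidiagonal n, hspN p.2 := by
  rw [hspN, sum_blocks_succ, headPeakTotal, ← sum_add_distrib]
  refine sum_congr rfl fun p _ => ?_
  simp only [hspL_cons, sum_add_distrib, headPeakSum, hspN]

end PeakSums

section GeneratingFunctions

open PowerSeries

variable {R : Type*} [CommRing R]

theorem PowerSeries.mk_natCast_eq_X_mul_mk_one_sq : (mk fun n => (n : R)) = X * mk 1 ^ 2 := by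
  rw [mk_one_pow_eq_mk_choose_add]
  ext (_ | n) <;> simp [coeff_succ_X_mul, add_comm]

theorem one_sub_two_X_mul_mk_card_composition :
    (1 - 2 * X) * mk (fun n => (Fintype.card (Composition n) : R)) = 1 - X := by
  rw [sub_mul, one_mul, two_mul, add_mul]
  ext (_ | _ | n) <;> simp [coeff_succ_X_mul, composition_card, pow_succ, coeff_X]
  ring

theorem mk_hspN : (mk fun n => (hspN n : R)) =
    X * (mk (fun n => (headPeakTotal n : R)) + mk 1 * mk fun n => (hspN n : R)) := by
  ext (_ | n)
  · simp [hspN_zero]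
  · rw [coeff_succ_X_mul]
    simp [coeff_mul, hspN_succ]

theorem mk_headPeakTotal : mk (fun n => (headPeakTotal n : R)) =
    mk (fun n => (headPeakSum 1 n : R)) + X ^ 3 * mk (fun n => (headPeakTotal n : R)) := by
  ext n
  rw [map_add, coeff_X_pow_mul']
  obtain hn | hn := lt_or_ge n 3
  · simp [hn, headPeakTotal_of_lt_three]
  · obtain ⟨n, rfl⟩ := Nat.exists_eq_add_of_le' hn
    simp [headPeakTotal_add_three]

theorem mk_headPeakSum_one : mk (fun n => (headPeakSum 1 n : R)) =
    X * (mk (fun n => (n : R)) * (X * mk fun n => (Fintype.card (Composition n) : R))) := by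
  ext (_ | m)
  · simp [headPeakSum_zero]
  · rw [coeff_succ_X_mul, coeff_mul, coeff_mk, headPeakSum_succ]
    push_cast
    refine Finset.sum_congr rfl fun ⟨i, k⟩ _ => ?_
    rcases k with _ | k <;> simp [headCount_zero, headCount_one_succ, coeff_succ_X_mul]

end GeneratingFunctions

open PowerSeries in
/-- `(1−2x)²·(1−x³)·(Σ_{n≥0} hsp(n)·xⁿ) = x⁴` in `ℚ[[x]]`. -/
theorem hspN_generating_function :
    (1 - 2 * (X : PowerSeries ℚ))^2 * (1 - X^3) * PowerSeries.mk (fun n => (hspN n : ℚ))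
      = X^4 := by
  set H := PowerSeries.mk fun n => (hspN n : ℚ)
  set T := PowerSeries.mk fun n => (headPeakTotal n : ℚ)
  set N := PowerSeries.mk fun n => (Fintype.card (Composition n) : ℚ)
  set G := PowerSeries.mk (1 : ℕ → ℚ)
  have hG : G * (1 - X) = 1 := mk_one_mul_one_sub_eq_one ℚ
  have hN : (1 - 2 * X) * N = 1 - X := one_sub_two_X_mul_mk_card_composition
  have hH : (1 - 2 * X) * H = X * (1 - X) * T := by
    linear_combination (1 - X) * mk_hspN (R := ℚ) + X * H * hG
  have hT : (1 - X ^ 3) * T = X ^ 3 * G ^ 2 * N := by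
    have hP := mk_headPeakSum_one (R := ℚ)
    rw [mk_natCast_eq_X_mul_mk_one_sq] at hP
    linear_combination mk_headPeakTotal (R := ℚ) + hP
  linear_combination (1 - 2 * X) * (1 - X ^ 3) * hH + (1 - 2 * X) * X * (1 - X) * hT
    + X ^ 4 * (1 - X) * G ^ 2 * hN
    + X ^ 4 * (G * (1 - X) + 1) * hG
end

section
/- For every integer n ≥ 3, hsp(n,3) = Σ_{m=2}^{n−2} h_m, where h_m = (3m−n)/2 if n−m is even and 1 ≤ (n−m)/2 ≤ m−1, and h_m = 0 otherwise. (The condition 1 ≤ (n−m)/2 ≤ m−1 says that b = (n−m)/2 is a positive integer smaller than m, so that b m b is a genuine symmetric peak.) -/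
/-- `hsp(n,k)`: the total sum of heights of symmetric peaks over all compositions of `n`
with exactly `k` parts. -/
def hspNK (n k : ℕ) : ℕ :=
  ∑ c ∈ (Finset.univ : Finset (Composition n)).filter (fun c => c.length = k),
    hspL c.blocks

/-! A composition `(a, m, d)` of `n` has a symmetric peak exactly when `a = d < m`; it is then
`(b, m, b)` with `b = (n - m) / 2` and contributes `m - b = (3m - n) / 2`. So the compositions
with nonzero `hsp` correspond bijectively, via their middle part, to the `m` with `h_m ≠ 0`. -/

lemma hspL_triple (a b d : ℕ) : hspL [a, b, d] = if a < b ∧ a = d then b - a else 0 := by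
  rw [hspL, symPeakIdx, show Finset.range [a, b, d].length = {0, 1, 2} from rfl]
  split_ifs with h
  · obtain ⟨hab, rfl⟩ := h
    simp [Finset.filter_insert, Finset.filter_singleton, hab]
  · simp [Finset.filter_insert, Finset.filter_singleton, h]

lemma Composition.exists_blocks_eq_symPeak {n : ℕ} (c : Composition n) (hlen : c.length = 3)
    (hc : hspL c.blocks ≠ 0) : ∃ a b, c.blocks = [a, b, a] ∧ 0 < a ∧ a < b ∧ 2 * a + b = n := by
  obtain ⟨a, b, d, hblocks⟩ := List.length_eq_three.mp hlen
  rw [hblocks, hspL_triple] at hc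
  obtain ⟨hab, rfl⟩ : a < b ∧ a = d := by by_contra h; simp [h] at hc
  have hsum := c.blocks_sum
  rw [hblocks, List.sum_cons, List.sum_cons, List.sum_singleton] at hsum
  exact ⟨a, b, hblocks, c.blocks_pos (by simp [hblocks]), hab, by omega⟩

def symPeakHeight (n m : ℕ) : ℕ :=
  if (n - m) % 2 = 0 ∧ 1 ≤ (n - m) / 2 ∧ (n - m) / 2 ≤ m - 1 then (3 * m - n) / 2 else 0

lemma symPeakHeight_eq {n m b : ℕ} (hb : 0 < b) (hbm : b < m) (hsum : 2 * b + m = n) :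
    symPeakHeight n m = m - b := by
  rw [symPeakHeight, if_pos (by omega)]
  omega

lemma exists_of_symPeakHeight_ne_zero {n m : ℕ} (h : symPeakHeight n m ≠ 0) :
    ∃ b, 0 < b ∧ b < m ∧ 2 * b + m = n := by
  rw [symPeakHeight] at h
  split_ifs at h with hpeak
  · exact ⟨(n - m) / 2, by omega, by omega, by omega⟩
  · exact absurd rfl h

lemma Composition.eq_of_hspL_ne_zero_of_middle_eq {n : ℕ} {c₁ c₂ : Composition n}
    (hlen₁ : c₁.length = 3) (hlen₂ : c₂.length = 3) (hc₁ : hspL c₁.blocks ≠ 0)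
    (hc₂ : hspL c₂.blocks ≠ 0) (hmid : c₁.blocks.getD 1 0 = c₂.blocks.getD 1 0) : c₁ = c₂ := by
  obtain ⟨a₁, b₁, hblocks₁, -, -, hsum₁⟩ := c₁.exists_blocks_eq_symPeak hlen₁ hc₁
  obtain ⟨a₂, b₂, hblocks₂, -, -, hsum₂⟩ := c₂.exists_blocks_eq_symPeak hlen₂ hc₂
  simp only [hblocks₁, hblocks₂, List.getD_cons_succ, List.getD_cons_zero] at hmid
  ext1
  rw [hblocks₁, hblocks₂, show a₁ = a₂ by omega, hmid]

lemma Composition.exists_middle_eq_of_symPeakHeight_ne_zero {n m : ℕ} (h : symPeakHeight n m ≠ 0) :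
    ∃ c : Composition n, c.length = 3 ∧ hspL c.blocks ≠ 0 ∧ c.blocks.getD 1 0 = m := by
  obtain ⟨b, hb, hbm, hsum⟩ := exists_of_symPeakHeight_ne_zero h
  have hpos : ∀ {i}, i ∈ [b, m, b] → 0 < i := by
    intro i hi
    simp only [List.mem_cons, List.not_mem_nil, or_false] at hi
    omega
  have hbmb : [b, m, b].sum = n := by
    simp only [List.sum_cons, List.sum_nil]
    omega
  refine ⟨⟨[b, m, b], hpos, hbmb⟩, rfl, ?_, rfl⟩
  rw [hspL_triple, if_pos ⟨hbm, rfl⟩]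
  omega

theorem hspN3_combinatorial_general (n : ℕ) :
    hspNK n 3 =
      ∑ m ∈ Finset.Icc 2 (n - 2),
        if (n - m) % 2 = 0 ∧ 1 ≤ (n - m) / 2 ∧ (n - m) / 2 ≤ m - 1
        then (3 * m - n) / 2 else 0 := by
  refine Finset.sum_bij_ne_zero (g := symPeakHeight n) (fun c _ _ => c.blocks.getD 1 0)
    ?_ ?_ ?_ ?_
  · intro c hc hne
    obtain ⟨a, b, hblocks, ha, hab, hsum⟩ :=
      c.exists_blocks_eq_symPeak (Finset.mem_filter.1 hc).2 hne
    simp only [hblocks, List.getD_cons_succ, List.getD_cons_zero, Finset.mem_Icc]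
    omega
  · intro c₁ hc₁ hne₁ c₂ hc₂ hne₂ hmid
    exact Composition.eq_of_hspL_ne_zero_of_middle_eq
      (Finset.mem_filter.1 hc₁).2 (Finset.mem_filter.1 hc₂).2 hne₁ hne₂ hmid
  · intro m _ hne
    obtain ⟨c, hlen, hc, hmid⟩ := Composition.exists_middle_eq_of_symPeakHeight_ne_zero hne
    exact ⟨c, Finset.mem_filter.2 ⟨Finset.mem_univ c, hlen⟩, hc, hmid⟩
  · intro c hc hne
    obtain ⟨a, b, hblocks, ha, hab, hsum⟩ :=
      c.exists_blocks_eq_symPeak (Finset.mem_filter.1 hc).2 hne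
    rw [hblocks, hspL_triple, if_pos ⟨hab, rfl⟩, List.getD_cons_succ, List.getD_cons_zero,
      symPeakHeight_eq ha hab hsum]

/-- For `n ≥ 3`, `hsp(n,3) = Σ_{m=2}^{n−2} h_m`, where `h_m = (3m−n)/2` if `n−m` is even
and `1 ≤ (n−m)/2 ≤ m−1`, and `h_m = 0` otherwise. -/
theorem hspN3_combinatorial (n : ℕ) (hn : 3 ≤ n) :
    hspNK n 3 =
      ∑ m ∈ Finset.Icc 2 (n - 2),
        if (n - m) % 2 = 0 ∧ 1 ≤ (n - m) / 2 ∧ (n - m) / 2 ≤ m - 1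
        then (3 * m - n) / 2 else 0 :=
  hspN3_combinatorial_general n
end

section
/- For all integers n ≥ 0 and k ≥ 4, dsv(n,k) = (k−2) · Σ_{m=1}^{⌊(n−k+1)/3⌋} Σ_{b=m+1}^{⌊(n−m−(k−3))/2⌋} C(n−2b−m−1, k−4)·(b−m), where C(·,·) is the binomial coefficient and empty sums are 0. -/
/-- The indices (0-based) of symmetric valleys of a list of naturals. -/
def symValleyIdx (L : List ℕ) : Finset ℕ :=
  (Finset.range L.length).filter (fun i =>
    i + 2 < L.length ∧ L.getD i 0 > L.getD (i+1) 0 ∧ L.getD i 0 = L.getD (i+2) 0)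

/-- `dsv π`: the sum of the depths of the symmetric valleys of `π`. -/
def dsvL (L : List ℕ) : ℕ := ∑ i ∈ symValleyIdx L, (L.getD i 0 - L.getD (i+1) 0)

/-- `dsv(n,k)`: the total sum of depths of symmetric valleys over all compositions of `n`
with exactly `k` parts. -/
def dsvNK (n k : ℕ) : ℕ :=
  ∑ c ∈ (Finset.univ : Finset (Composition n)).filter (fun c => c.length = k),
    dsvL c.blocks

/-!
Write `dsv π` as the sum over the windows `i < k - 2` of the depth of `π` at `i`. Rotation is a
bijection on the compositions of `n` with `k` parts carrying window `i` to window `0`, so each of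
the `k - 2` windows contributes the same total. At window `0`, a symmetric valley `(b, m, b)` with
`m < b` is completed by any composition of `n - 2b - m` into `k - 3` parts, of which there are
`C(n - 2b - m - 1, k - 4)`, and each contributes the depth `b - m`.
-/

open Finset

theorem Finset.sum_comm_of_ne_zero {α β M : Type*} [AddCommMonoid M]
    {s : Finset α} {t : α → Finset β} {s' : Finset β} {t' : β → Finset α} {f : α → β → M}
    (h : ∀ a b, f a b ≠ 0 → (a ∈ s ∧ b ∈ t a ↔ b ∈ s' ∧ a ∈ t' b)) :
    ∑ a ∈ s, ∑ b ∈ t a, f a b = ∑ b ∈ s', ∑ a ∈ t' b, f a b := by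
  classical
  calc ∑ a ∈ s, ∑ b ∈ t a, f a b = ∑ a ∈ s, ∑ b ∈ t a with f a b ≠ 0, f a b := by
        simp only [sum_filter_ne_zero]
    _ = ∑ b ∈ s', ∑ a ∈ t' b with f a b ≠ 0, f a b :=
        sum_comm' fun a b => by simp only [mem_filter]; grind
    _ = ∑ b ∈ s', ∑ a ∈ t' b, f a b := by simp only [sum_filter_ne_zero]

namespace DsvNK

def listCompositions : ℕ → ℕ → Finset (List ℕ)
  | n, 0 => if n = 0 then {[]} else ∅
  | n, k + 1 => (Icc 1 n).biUnion fun a => (listCompositions (n - a) k).image (a :: ·)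

theorem mem_listCompositions {n k : ℕ} {L : List ℕ} :
    L ∈ listCompositions n k ↔ L.sum = n ∧ L.length = k ∧ ∀ x ∈ L, 0 < x := by
  induction k generalizing n L with
  | zero => cases L <;> by_cases n = 0 <;> simp [listCompositions, *, eq_comm]
  | succ k ih =>
    cases L with
    | nil => simp [listCompositions]
    | cons a L =>
      simp only [listCompositions, mem_biUnion, mem_image, mem_Icc, List.cons.injEq,
        exists_eq_right_right, ih, List.sum_cons, List.length_cons, List.forall_mem_cons]
      grind

theorem sum_listCompositions_succ {M : Type*} [AddCommMonoid M] (n k : ℕ) (f : List ℕ → M) :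
    ∑ L ∈ listCompositions n (k + 1), f L =
      ∑ a ∈ Icc 1 n, ∑ L ∈ listCompositions (n - a) k, f (a :: L) := by
  rw [listCompositions, sum_biUnion]
  · exact sum_congr rfl fun a _ => sum_image fun _ _ _ _ h => List.cons_injective h
  · intro a _ a' _ hne
    simp only [Function.onFun, disjoint_left, mem_image]
    rintro _ ⟨L, -, rfl⟩ ⟨L', -, h⟩
    exact hne (List.cons_eq_cons.1 h).1.symm

theorem listCompositions_eq_empty {n k : ℕ} (h : n < k) : listCompositions n k = ∅ :=
  eq_empty_of_forall_notMem fun L hL => by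
    obtain ⟨hsum, hlen, hpos⟩ := mem_listCompositions.1 hL
    have := L.length_le_sum_of_one_le hpos
    omega

theorem card_listCompositions_succ (n k : ℕ) :
    #(listCompositions n (k + 1)) = ∑ t ∈ range n, #(listCompositions t k) := by
  rw [card_eq_sum_ones, sum_listCompositions_succ]
  refine sum_nbij' (n - ·) (n - ·) ?_ ?_ ?_ ?_ ?_ <;> intros <;> simp_all <;> omega

theorem card_listCompositions_succ_succ (s j : ℕ) :
    #(listCompositions (s + 1) (j + 1)) = s.choose j := by
  induction s generalizing j with
  | zero => cases j <;> simp [listCompositions]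
  | succ s ih =>
    cases j with
    | zero => rw [card_listCompositions_succ]; simp [listCompositions, apply_ite card]
    | succ j => rw [card_listCompositions_succ, sum_range_succ, ← card_listCompositions_succ,
        ih, ih, Nat.choose_succ_succ', add_comm]

theorem sum_listCompositions_rotate {M : Type*} [AddCommMonoid M] (n k i : ℕ)
    (f : List ℕ → M) :
    ∑ L ∈ listCompositions n k, f (L.rotate i) = ∑ L ∈ listCompositions n k, f L := by
  have hmaps : ∀ L ∈ listCompositions n k, L.rotate i ∈ listCompositions n k := by
    intro L hL
    obtain ⟨hsum, hlen, hpos⟩ := mem_listCompositions.1 hL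
    exact mem_listCompositions.2 ⟨(L.rotate_perm i).sum_eq.trans hsum,
      (L.length_rotate i).trans hlen, fun x hx => hpos x (List.mem_rotate.1 hx)⟩
  have himage : (listCompositions n k).image (·.rotate i) = listCompositions n k :=
    eq_of_subset_of_card_le (image_subset_iff.2 hmaps)
      (card_image_of_injective _ (List.rotate_injective i)).ge
  rw [← sum_image (f := f) fun _ _ _ _ h => List.rotate_injective i h, himage]

theorem image_blocks_filter_length (n k : ℕ) :
    ((univ : Finset (Composition n)).filter (fun c => c.length = k)).image Composition.blocks =
      listCompositions n k := by
  ext L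
  simp only [mem_image, mem_filter, mem_univ, true_and, mem_listCompositions]
  constructor
  · rintro ⟨c, rfl, rfl⟩
    exact ⟨c.blocks_sum, c.blocks_length, fun _ => c.blocks_pos⟩
  · rintro ⟨hsum, rfl, hpos⟩
    exact ⟨⟨L, hpos _, hsum⟩, rfl, rfl⟩

theorem sum_compositions_blocks {M : Type*} [AddCommMonoid M] (n k : ℕ) (f : List ℕ → M) :
    ∑ c ∈ (univ : Finset (Composition n)).filter (fun c => c.length = k), f c.blocks =
      ∑ L ∈ listCompositions n k, f L := by
  rw [← image_blocks_filter_length, sum_image fun _ _ _ _ h => Composition.ext h]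

-- `b - m` truncates to `0` unless `m < b`, so this is the depth of a symmetric valley at `i`
-- and `0` at any other position.
def valleyDepth (L : List ℕ) (i : ℕ) : ℕ :=
  if L.getD i 0 = L.getD (i + 2) 0 then L.getD i 0 - L.getD (i + 1) 0 else 0

theorem dsvL_eq_sum_valleyDepth (L : List ℕ) :
    dsvL L = ∑ i ∈ range (L.length - 2), valleyDepth L i := by
  rw [dsvL, symValleyIdx, sum_filter]
  refine (sum_subset (range_subset_range.2 (Nat.sub_le _ _)) fun i _ hi => ?_).symm.trans
    (sum_congr rfl fun i hi => ?_)
  · simp only [mem_range] at hi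
    rw [if_neg (by omega)]
  · simp only [mem_range] at hi
    unfold valleyDepth
    split_ifs <;> omega

theorem getD_rotate {α : Type*} {L : List α} {i j : ℕ} {d : α} (h : i + j < L.length) :
    (L.rotate i).getD j d = L.getD (i + j) d := by
  rw [List.getD_eq_getElem?_getD, List.getElem?_rotate (by omega), Nat.mod_eq_of_lt (by omega),
    add_comm, List.getD_eq_getElem?_getD]

theorem valleyDepth_rotate {L : List ℕ} {i : ℕ} (h : i + 3 ≤ L.length) :
    valleyDepth (L.rotate i) 0 = valleyDepth L i := by
  simp only [valleyDepth, getD_rotate (show i + 0 < L.length by omega),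
    getD_rotate (show i + 1 < L.length by omega), getD_rotate (show i + 2 < L.length by omega)]
  rfl

theorem sum_valleyDepth_eq_sum_valleyDepth_zero {n k i : ℕ} (hi : i + 3 ≤ k) :
    ∑ L ∈ listCompositions n k, valleyDepth L i =
      ∑ L ∈ listCompositions n k, valleyDepth L 0 := by
  calc ∑ L ∈ listCompositions n k, valleyDepth L i
      = ∑ L ∈ listCompositions n k, valleyDepth (L.rotate i) 0 :=
        sum_congr rfl fun L hL => (valleyDepth_rotate ((mem_listCompositions.1 hL).2.1 ▸ hi)).symm
    _ = ∑ L ∈ listCompositions n k, valleyDepth L 0 :=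
        sum_listCompositions_rotate n k i (valleyDepth · 0)

theorem sum_valleyDepth_zero {n k : ℕ} (hk : 4 ≤ k) :
    ∑ L ∈ listCompositions n k, valleyDepth L 0 =
      ∑ m ∈ Icc 1 ((n - k + 1) / 3), ∑ b ∈ Icc (m + 1) ((n + 3 - m - k) / 2),
        (n - 2 * b - m - 1).choose (k - 4) * (b - m) := by
  obtain ⟨j, rfl⟩ : ∃ j, k = j + 4 := ⟨k - 4, by omega⟩
  have hpeel : ∑ L ∈ listCompositions n (j + 4), valleyDepth L 0 =
      ∑ b ∈ Icc 1 n, ∑ m ∈ Icc 1 (n - b),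
        #(listCompositions (n - 2 * b - m) (j + 1)) * (b - m) := by
    simp only [sum_listCompositions_succ _ (j + 3), sum_listCompositions_succ _ (j + 2),
      sum_listCompositions_succ _ (j + 1)]
    refine sum_congr rfl fun b hb => sum_congr rfl fun m hm => ?_
    have hdepth : ∀ c R, valleyDepth (b :: m :: c :: R) 0 = if b = c then b - m else 0 := by
      simp [valleyDepth]
    simp only [hdepth, sum_const, smul_eq_mul, mul_ite, mul_zero, sum_ite_eq, mem_Icc]
    split_ifs
    · rw [show n - b - m - b = n - 2 * b - m by omega]
    · simp only [mem_Icc] at hb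
      rw [show n - 2 * b - m = 0 by omega, listCompositions_eq_empty (by omega), card_empty,
        zero_mul]
  rw [hpeel]
  -- only pairs with `m < b` leaving room for `k - 3` further parts contribute
  refine (sum_comm_of_ne_zero fun b m hne => ?_).trans
    (sum_congr rfl fun m hm => sum_congr rfl fun b hb => ?_)
  · have hbm : b - m ≠ 0 := right_ne_zero_of_mul hne
    have hroom : j + 1 ≤ n - 2 * b - m := by
      by_contra h
      rw [listCompositions_eq_empty (by omega), card_empty, zero_mul] at hne
      exact hne rfl
    simp only [mem_Icc]
    omega
  · simp only [mem_Icc] at hm hb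
    rw [show n - 2 * b - m = (n - 2 * b - m - 1) + 1 by omega, card_listCompositions_succ_succ,
      Nat.add_sub_cancel, Nat.add_sub_cancel]

end DsvNK

open DsvNK in
/-- For `n ≥ 0` and `k ≥ 4`,
`dsv(n,k) = (k−2)·Σ_{m=1}^{⌊(n−k+1)/3⌋} Σ_{b=m+1}^{⌊(n−m−(k−3))/2⌋} C(n−2b−m−1, k−4)·(b−m)`.
(All subtractions below are exact: within the summation ranges no natural-number
truncation occurs, and empty ranges give empty sums.) -/
theorem dsvNK_combinatorial (n k : ℕ) (hk : 4 ≤ k) :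
    dsvNK n k =
      (k - 2) * ∑ m ∈ Finset.Icc 1 ((n - k + 1) / 3),
        ∑ b ∈ Finset.Icc (m + 1) ((n + 3 - m - k) / 2),
          Nat.choose (n - 2*b - m - 1) (k - 4) * (b - m) := by
  calc dsvNK n k
      = ∑ L ∈ listCompositions n k, ∑ i ∈ range (k - 2), valleyDepth L i := by
        rw [dsvNK, sum_compositions_blocks]
        refine sum_congr rfl fun L hL => ?_
        rw [dsvL_eq_sum_valleyDepth, (mem_listCompositions.1 hL).2.1]
    _ = ∑ i ∈ range (k - 2), ∑ L ∈ listCompositions n k, valleyDepth L 0 := by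
        rw [sum_comm]
        exact sum_congr rfl fun i hi =>
          sum_valleyDepth_eq_sum_valleyDepth_zero (by rw [mem_range] at hi; omega)
    _ = _ := by rw [sum_const, card_range, smul_eq_mul, sum_valleyDepth_zero hk]
end

section
/- For every integer n ≥ 3, dsv(n,3) = Σ_{m=1}^{⌊(n−2)/3⌋} d_m, where d_m = (n−3m)/2 if n−m is even, and d_m = 0 otherwise. -/
/-! A composition with three parts has positive `dsv` only if it is `b m b` with `m < b`, and then
`dsv = b - m = (n - 3m)/2`. Such a composition is determined by its middle part `m`, which can be any
`1 ≤ m ≤ (n - 2)/3` with `n - m` even. -/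

lemma dsvL_triple (a b c : ℕ) : dsvL [a, b, c] = if b < a ∧ a = c then a - b else 0 := by
  simp [dsvL, symValleyIdx, Finset.sum_filter, Finset.sum_range_succ]

lemma Composition.exists_blocks_eq_symm_valley {n : ℕ} (c : Composition n) (hc : c.length = 3)
    (hv : dsvL c.blocks ≠ 0) :
    ∃ a m, c.blocks = [a, m, a] ∧ 0 < m ∧ m < a ∧ 2 * a + m = n := by
  obtain ⟨a, m, d, hblocks⟩ := List.length_eq_three.mp hc
  have hsum := c.blocks_sum
  simp only [hblocks, List.sum_cons, List.sum_nil, add_zero] at hsum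
  rw [hblocks, dsvL_triple] at hv
  split_ifs at hv with hvalley
  · obtain ⟨hma, rfl⟩ := hvalley
    exact ⟨a, m, hblocks, c.blocks_pos (by simp [hblocks]), hma, by omega⟩
  · exact absurd rfl hv

lemma Composition.exists_symm_valley_of_middle {n m : ℕ} (hm : 1 ≤ m) (hmn : m ≤ (n - 2) / 3)
    (hpar : (n - m) % 2 = 0) :
    ∃ c : Composition n, c.length = 3 ∧ c.blocks.getD 1 0 = m ∧ dsvL c.blocks = (n - 3 * m) / 2 := by
  refine ⟨⟨[(n - m) / 2, m, (n - m) / 2], ?_, ?_⟩, rfl, rfl, ?_⟩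
  · intro i hi
    simp only [List.mem_cons, List.not_mem_nil, or_false] at hi
    omega
  · simp only [List.sum_cons, List.sum_nil, add_zero]
    omega
  · rw [dsvL_triple, if_pos (by omega)]
    omega

theorem dsvN3_combinatorial_general (n : ℕ) :
    dsvNK n 3 =
      ∑ m ∈ Finset.Icc 1 ((n - 2) / 3),
        if (n - m) % 2 = 0 then (n - 3 * m) / 2 else 0 := by
  refine Finset.sum_bij_ne_zero (fun c _ _ => c.blocks.getD 1 0) ?_ ?_ ?_ ?_
  · intro c hc hv
    obtain ⟨a, m, hblocks, hm, hma, hsum⟩ :=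
      c.exists_blocks_eq_symm_valley (Finset.mem_filter.mp hc).2 hv
    simp only [hblocks, List.getD_cons_succ, List.getD_cons_zero, Finset.mem_Icc]
    omega
  · intro c hc hv c' hc' hv' hm
    obtain ⟨a, m, hblocks, -, -, hsum⟩ :=
      c.exists_blocks_eq_symm_valley (Finset.mem_filter.mp hc).2 hv
    obtain ⟨a', m', hblocks', -, -, hsum'⟩ :=
      c'.exists_blocks_eq_symm_valley (Finset.mem_filter.mp hc').2 hv'
    simp only [hblocks, hblocks', List.getD_cons_succ, List.getD_cons_zero] at hm
    apply Composition.ext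
    simp only [hblocks, hblocks', List.cons.injEq, and_true]
    omega
  · intro m hm hv
    rw [Finset.mem_Icc] at hm
    have hpar : (n - m) % 2 = 0 := by by_contra h; simp [h] at hv
    obtain ⟨c, hc, hmid, hdsv⟩ := Composition.exists_symm_valley_of_middle hm.1 hm.2 hpar
    rw [if_pos hpar] at hv
    exact ⟨c, Finset.mem_filter.mpr ⟨Finset.mem_univ c, hc⟩, hdsv ▸ hv, hmid⟩
  · intro c hc hv
    obtain ⟨a, m, hblocks, -, hma, hsum⟩ :=
      c.exists_blocks_eq_symm_valley (Finset.mem_filter.mp hc).2 hv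
    rw [hblocks, dsvL_triple, if_pos ⟨hma, rfl⟩]
    simp only [List.getD_cons_succ, List.getD_cons_zero]
    rw [if_pos (by omega)]
    omega

/-- For `n ≥ 3`, `dsv(n,3) = Σ_{m=1}^{⌊(n−2)/3⌋} d_m`, where `d_m = (n−3m)/2` if `n−m`
is even, and `d_m = 0` otherwise. -/
theorem dsvN3_combinatorial (n : ℕ) (hn : 3 ≤ n) :
    dsvNK n 3 =
      ∑ m ∈ Finset.Icc 1 ((n - 2) / 3),
        if (n - m) % 2 = 0 then (n - 3 * m) / 2 else 0 :=
  dsvN3_combinatorial_general n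
end

section
/- Fix a real p with 0 < p ≤ 1 and q = 1 − p, and let n ≥ 2 be an integer. Then Σ_{w ∈ (ℤ⁺)ⁿ} P(w)·sp(w) = (p²·q/(1−q³))·(n−2), where the sum over all words w of length n converges absolutely. In other words, the expected number of symmetric peaks in a sample of n geometric random variables is p²q(n−2)/(1−q³). -/
/-- The probability of the word `w` of length `n` with i.i.d. geometric letters:
`P(w) = ∏_{i} p·q^{wᵢ−1}`. -/
def wordP (p q : ℝ) {n : ℕ} (w : Fin n → ℕ+) : ℝ :=
  ∏ i : Fin n, p * q ^ ((w i : ℕ) - 1)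

/-!
Removing the first letter of a word of length at least three lowers `sp` by exactly the
indicator that the first three letters form a symmetric peak. Since the letters are i.i.d.,
each extra letter therefore adds the same amount `P(X₁ < X₂, X₁ = X₃)` to the expectation,
which starts at `0` for words of length two. For geometric letters `P(X > a) = q ^ a`, so
this probability is `∑ₐ (p q^(a-1))² q^a = p² q / (1 - q³)`.

All sums are taken in `ℝ≥0∞`, where they may be interchanged freely; the real series is then
summable because its `ℝ≥0∞` counterpart is finite.
-/

open scoped ENNReal

lemma ENNReal.tsum_fin_succ_pi {α : Type*} {m : ℕ} (F : (Fin (m + 1) → α) → ℝ≥0∞) :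
    ∑' w, F w = ∑' (a) (v : Fin m → α), F (Fin.cons a v) := by
  rw [← (Fin.consEquiv fun _ => α).tsum_eq, ← ENNReal.tsum_prod]
  rfl

lemma hasSum_of_tsum_ofReal_eq {β : Type*} {f : β → ℝ} (hf : ∀ x, 0 ≤ f x) {r : ℝ} (hr : 0 ≤ r)
    (h : ∑' x, ENNReal.ofReal (f x) = ENNReal.ofReal r) : HasSum f r := by
  have hsum := ENNReal.hasSum_toReal (h ▸ ENNReal.ofReal_ne_top)
  rw [← ENNReal.tsum_toReal_eq fun _ => ENNReal.ofReal_ne_top, h, ENNReal.toReal_ofReal hr] at hsum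
  simpa only [ENNReal.toReal_ofReal (hf _)] using hsum

section WordWeight

variable {α : Type*} (g : α → ℝ≥0∞)

noncomputable def wordWeight {m : ℕ} (w : Fin m → α) : ℝ≥0∞ := ∏ j, g (w j)

lemma wordWeight_cons {m : ℕ} (a : α) (v : Fin m → α) :
    wordWeight g (Fin.cons a v) = g a * wordWeight g v := by
  simp [wordWeight, Fin.prod_univ_succ]

variable {g}

lemma tsum_wordWeight_mul_tail (hg : ∑' a, g a = 1) {m : ℕ} (F : (Fin m → α) → ℝ≥0∞) :
    ∑' w : Fin (m + 1) → α, wordWeight g w * F (Fin.tail w) = ∑' v, wordWeight g v * F v := by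
  simp [ENNReal.tsum_fin_succ_pi, wordWeight_cons, mul_assoc, ENNReal.tsum_mul_left,
    ENNReal.tsum_mul_right, hg]

lemma tsum_wordWeight (hg : ∑' a, g a = 1) (m : ℕ) : ∑' w : Fin m → α, wordWeight g w = 1 := by
  induction m with
  | zero => simp [wordWeight]
  | succ m ih => simpa [ih] using tsum_wordWeight_mul_tail hg (m := m) (fun _ => 1)

lemma tsum_wordWeight_mul_window (hg : ∑' a, g a = 1) {m : ℕ} (φ : α → α → α → ℝ≥0∞) :
    ∑' w : Fin (m + 3) → α, wordWeight g w * φ (w 0) (w 1) (w 2) =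
      ∑' (a) (b) (c), g a * g b * g c * φ a b c := by
  simp [ENNReal.tsum_fin_succ_pi, wordWeight_cons, mul_assoc, ENNReal.tsum_mul_left,
    ENNReal.tsum_mul_right, -Fin.succ_one_eq_two', ← Fin.succ_one_eq_two, tsum_wordWeight hg]

end WordWeight

lemma spL_cons_cons_cons (a b c : ℕ) (L : List ℕ) :
    spL (a :: b :: c :: L) = spL (b :: c :: L) + if a < b ∧ a = c then 1 else 0 := by
  simp only [spL, symPeakIdx, Finset.card_filter, List.length_cons]
  rw [Finset.sum_range_succ']
  simp

lemma spL_eq_zero_of_length_le_two {L : List ℕ} (h : L.length ≤ 2) : spL L = 0 := by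
  simp only [spL, Finset.card_eq_zero, symPeakIdx, Finset.filter_eq_empty_iff]
  omega

lemma spL_ofFn_succ {k : ℕ} (w : Fin (k + 3) → ℕ) :
    spL (List.ofFn w) = spL (List.ofFn (Fin.tail w)) + if w 0 < w 1 ∧ w 0 = w 2 then 1 else 0 := by
  simp only [List.ofFn_succ, Fin.tail]
  rw [spL_cons_cons_cons]
  rfl

noncomputable def symPeakMass (g : ℕ+ → ℝ≥0∞) : ℝ≥0∞ :=
  ∑' (a) (b) (c), g a * g b * g c * if a < b ∧ a = c then 1 else 0

lemma tsum_wordWeight_mul_spL {g : ℕ+ → ℝ≥0∞} (hg : ∑' a, g a = 1) (k : ℕ) :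
    ∑' w : Fin (k + 2) → ℕ+, wordWeight g w * spL (List.ofFn fun i => (w i : ℕ)) =
      k * symPeakMass g := by
  induction k with
  | zero => simp [spL_eq_zero_of_length_le_two]
  | succ k ih =>
    calc ∑' w : Fin (k + 3) → ℕ+, wordWeight g w * spL (List.ofFn fun i => (w i : ℕ))
        = ∑' w : Fin (k + 3) → ℕ+,
            (wordWeight g w * spL (List.ofFn fun i => (Fin.tail w i : ℕ)) +
              wordWeight g w * if w 0 < w 1 ∧ w 0 = w 2 then 1 else 0) := by
          refine tsum_congr fun w => ?_
          rw [spL_ofFn_succ, ← mul_add]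
          push_cast [PNat.coe_lt_coe, PNat.coe_inj]
          rfl
      _ = k * symPeakMass g + symPeakMass g := by
          rw [ENNReal.tsum_add,
            tsum_wordWeight_mul_tail hg fun v => (spL (List.ofFn fun i => (v i : ℕ)) : ℝ≥0∞), ih,
            tsum_wordWeight_mul_window hg fun a b c => if a < b ∧ a = c then 1 else 0,
            symPeakMass]
      _ = (k + 1 : ℕ) * symPeakMass g := by push_cast; ring

section Geometric

variable {Q : ℝ≥0∞}

noncomputable def geomWeight (Q : ℝ≥0∞) (k : ℕ+) : ℝ≥0∞ := (1 - Q) * Q ^ ((k : ℕ) - 1)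

lemma tsum_one_sub_mul_pow (hQ : Q < 1) : ∑' n : ℕ, (1 - Q) * Q ^ n = 1 := by
  rw [ENNReal.tsum_mul_left, ENNReal.tsum_geometric]
  exact ENNReal.mul_inv_cancel (tsub_pos_of_lt hQ).ne' (ENNReal.sub_ne_top ENNReal.one_ne_top)

lemma tsum_geomWeight (hQ : Q < 1) : ∑' k, geomWeight Q k = 1 := by
  refine (tsum_pnat_eq_tsum_succ (f := fun n => (1 - Q) * Q ^ (n - 1))).trans ?_
  simpa using tsum_one_sub_mul_pow hQ

lemma tsum_geomWeight_gt (hQ : Q < 1) (a : ℕ+) :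
    ∑' b, (if a < b then geomWeight Q b else 0) = Q ^ (a : ℕ) := by
  refine (tsum_pnat_eq_tsum_succ
    (f := fun n => if (a : ℕ) < n then (1 - Q) * Q ^ (n - 1) else 0)).trans ?_
  rw [← ENNReal.summable.sum_add_tsum_nat_add' (k := a)]
  have head_zero : ∀ n ∈ Finset.range a, (if (a : ℕ) ≤ n then (1 - Q) * Q ^ n else 0) = 0 :=
    fun n hn => if_neg (by simpa using hn)
  have tail_term (n : ℕ) : (1 - Q) * Q ^ (n + a) = Q ^ (a : ℕ) * ((1 - Q) * Q ^ n) := by ring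
  simp only [Nat.add_sub_cancel, Nat.lt_succ_iff, le_add_iff_nonneg_left, zero_le, if_true]
  rw [Finset.sum_eq_zero head_zero, zero_add, tsum_congr tail_term, ENNReal.tsum_mul_left,
    tsum_one_sub_mul_pow hQ, mul_one]

lemma symPeakMass_geomWeight (hQ : Q < 1) :
    symPeakMass (geomWeight Q) = (1 - Q) ^ 2 * Q * (1 - Q ^ 3)⁻¹ := by
  have sum_third (a b : ℕ+) : ∑' c, geomWeight Q a * geomWeight Q b * geomWeight Q c *
      (if a < b ∧ a = c then 1 else 0) = geomWeight Q a ^ 2 * if a < b then geomWeight Q b else 0 := by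
    by_cases hab : a < b <;> simp [hab, eq_comm (a := a), tsum_ite_eq]
    ring
  simp only [symPeakMass, sum_third, ENNReal.tsum_mul_left, tsum_geomWeight_gt hQ]
  refine (tsum_pnat_eq_tsum_succ (f := fun n => ((1 - Q) * Q ^ (n - 1)) ^ 2 * Q ^ n)).trans ?_
  have term (n : ℕ) : ((1 - Q) * Q ^ (n + 1 - 1)) ^ 2 * Q ^ (n + 1) =
      (1 - Q) ^ 2 * Q * (Q ^ 3) ^ n := by
    rw [Nat.add_sub_cancel]; ring
  rw [tsum_congr term, ENNReal.tsum_mul_left, ENNReal.tsum_geometric]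

end Geometric

lemma ofReal_wordP {q : ℝ} (hq0 : 0 ≤ q) (hq1 : q ≤ 1) {n : ℕ} (w : Fin n → ℕ+) :
    ENNReal.ofReal (wordP (1 - q) q w) = wordWeight (geomWeight (ENNReal.ofReal q)) w := by
  have hp : 0 ≤ 1 - q := sub_nonneg.2 hq1
  rw [wordP, ENNReal.ofReal_prod_of_nonneg fun i _ => by positivity]
  refine Finset.prod_congr rfl fun i _ => ?_
  rw [ENNReal.ofReal_mul hp, ENNReal.ofReal_pow hq0, ENNReal.ofReal_sub _ hq0, ENNReal.ofReal_one]
  rfl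

lemma hasSum_wordP_mul_spL {q : ℝ} (hq0 : 0 ≤ q) (hq1 : q < 1) (k : ℕ) :
    HasSum (fun w : Fin (k + 2) → ℕ+ =>
        wordP (1 - q) q w * (spL (List.ofFn fun i => (w i : ℕ)) : ℝ))
      ((1 - q) ^ 2 * q / (1 - q ^ 3) * k) := by
  have hp : 0 ≤ 1 - q := sub_nonneg.2 hq1.le
  have hq3 : 0 < 1 - q ^ 3 := sub_pos.2 (pow_lt_one₀ hq0 hq1 three_ne_zero)
  have hQ : ENNReal.ofReal q < 1 := ENNReal.ofReal_lt_one.2 hq1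
  have hmass_nonneg : 0 ≤ (1 - q) ^ 2 * q / (1 - q ^ 3) := by positivity
  have hwordP (w : Fin (k + 2) → ℕ+) : 0 ≤ wordP (1 - q) q w :=
    Finset.prod_nonneg fun i _ => by positivity
  have hmass : ENNReal.ofReal ((1 - q) ^ 2 * q / (1 - q ^ 3)) =
      symPeakMass (geomWeight (ENNReal.ofReal q)) := by
    rw [symPeakMass_geomWeight hQ, ENNReal.ofReal_div_of_pos hq3, div_eq_mul_inv,
      ENNReal.ofReal_mul (by positivity), ENNReal.ofReal_pow hp, ENNReal.ofReal_sub _ hq0,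
      ENNReal.ofReal_sub _ (by positivity), ENNReal.ofReal_pow hq0, ENNReal.ofReal_one]
  refine hasSum_of_tsum_ofReal_eq (fun w => mul_nonneg (hwordP w) (Nat.cast_nonneg _))
    (mul_nonneg hmass_nonneg k.cast_nonneg) ?_
  simp only [ENNReal.ofReal_mul (hwordP _), ENNReal.ofReal_natCast, ofReal_wordP hq0 hq1.le]
  rw [tsum_wordWeight_mul_spL (tsum_geomWeight hQ), ENNReal.ofReal_mul hmass_nonneg, hmass,
    ENNReal.ofReal_natCast, mul_comm]

/-- For `0 < p ≤ 1`, `q = 1 − p`, and `n ≥ 2`, the expected number of symmetric peaks in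
a sample of `n` geometric random variables is `p²q(n−2)/(1−q³)`; the sum over all words
converges (absolutely, as all terms are nonnegative). -/
theorem expected_symmetric_peaks (p q : ℝ) (hp : 0 < p) (hp1 : p ≤ 1) (hq : q = 1 - p)
    (n : ℕ) (hn : 2 ≤ n) :
    Summable (fun w : Fin n → ℕ+ =>
      wordP p q w * (spL (List.ofFn fun i => (w i : ℕ)) : ℝ)) ∧
    ∑' w : Fin n → ℕ+, wordP p q w * (spL (List.ofFn fun i => (w i : ℕ)) : ℝ)
      = p ^ 2 * q / (1 - q ^ 3) * ((n : ℝ) - 2) := by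
  obtain rfl : p = 1 - q := by linarith
  obtain ⟨k, rfl⟩ : ∃ k, n = k + 2 := ⟨n - 2, by omega⟩
  have h := hasSum_wordP_mul_spL (q := q) (by linarith) (by linarith) k
  push_cast
  rw [add_sub_cancel_right]
  exact ⟨h.summable, h.tsum_eq⟩
end

section
/- Fix a real p with 0 < p ≤ 1 and q = 1 − p, and let n ≥ 2 be an integer. Then Σ_{w ∈ (ℤ⁺)ⁿ} P(w)·dsv(w) = q·(p/(1−q³) − 1/(1+q)²)·(n−2), where the sum over all words w of length n converges absolutely. In other words, the expected value of the sum of depths of symmetric valleys in a sample of n geometric random variables is q(p/(1−q³) − 1/(1+q)²)(n−2). -/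
/-! By linearity of expectation, `E[dsv]` is the sum over the `n - 2` windows of
three consecutive letters of the expected valley depth of the window, and by independence each
window contributes `E[valleyDepth X Y Z]` for three i.i.d. geometric letters. The nonzero terms are
`X = Z = Y + d`, so this expectation is `p³ ∑_y q^{3y} ∑_d d q^{2d} = p³q²/((1-q²)²(1-q³))`, which
simplifies to `q(p/(1-q³) - 1/(1+q)²)`. Working with `ℝ≥0∞`-valued sums makes all the
rearrangements unconditional; summability over words follows because the total is finite. -/

open scoped ENNReal
open Finset

namespace ENNReal

variable {α κ ι : Type*}

theorem tsum_pi_prod [Fintype κ] (f : κ → α → ℝ≥0∞) :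
    ∑' v : κ → α, ∏ k, f k (v k) = ∏ k, ∑' a, f k a := by
  refine Fintype.induction_empty_option
    (P := fun κ _ => ∀ f : κ → α → ℝ≥0∞, ∑' v : κ → α, ∏ k, f k (v k) = ∏ k, ∑' a, f k a)
    (fun κ κ' _ e ih f => ?_) (fun f => by simp) (fun κ _ ih f => ?_) κ f
  · let := Fintype.ofEquiv κ' e.symm
    rw [← (e.arrowCongr (Equiv.refl α)).tsum_eq, ← e.prod_comp, ← ih]
    refine tsum_congr fun v => ?_
    rw [← e.prod_comp]
    simp [Equiv.arrowCongr_apply]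
  · rw [← Equiv.piOptionEquivProd.symm.tsum_eq, ENNReal.tsum_prod']
    simp [Fintype.prod_option, ENNReal.tsum_mul_left, ENNReal.tsum_mul_right, ih]

theorem tsum_pi_prod_mul_comp_embedding [Fintype ι] [Fintype κ] {f : α → ℝ≥0∞}
    (hf : ∑' a, f a = 1) (e : κ ↪ ι) (G : (κ → α) → ℝ≥0∞) :
    ∑' w : ι → α, (∏ i, f (w i)) * G (w ∘ e) = ∑' u : κ → α, (∏ k, f (u k)) * G u := by
  classical
  let σ : κ ⊕ ↥(Set.range e)ᶜ ≃ ι :=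
    (Equiv.sumCongr (Equiv.ofInjective e e.injective) (Equiv.refl _)).trans (Equiv.sumCompl _)
  let T := (Equiv.sumArrowEquivProdArrow κ _ α).symm.trans (σ.arrowCongr (Equiv.refl α))
  have hT_comp (u v) : T (u, v) ∘ e = u := by
    ext k
    change T (u, v) (σ (.inl k)) = u k
    simp [T]
  have hT_prod (u v) : ∏ i, f (T (u, v) i) = (∏ k, f (u k)) * ∏ c, f (v c) := by
    rw [← σ.prod_comp, Fintype.prod_sum_type]
    simp [T]
  rw [← T.tsum_eq, ENNReal.tsum_prod']
  refine tsum_congr fun u => ?_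
  simp_rw [hT_comp, hT_prod, mul_right_comm _ _ (G u), ENNReal.tsum_mul_left, tsum_pi_prod, hf,
    prod_const_one, mul_one]

theorem tsum_ofReal_eq_of_hasSum {f : α → ℝ} {a : ℝ} (hf : ∀ i, 0 ≤ f i) (h : HasSum f a) :
    ∑' i, ENNReal.ofReal (f i) = ENNReal.ofReal a := by
  rw [← ENNReal.ofReal_tsum_of_nonneg hf h.summable, h.tsum_eq]

end ENNReal

theorem hasSum_of_tsum_ofReal_eq_s19 {α : Type*} {f : α → ℝ} {a : ℝ} (hf : ∀ i, 0 ≤ f i)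
    (ha : 0 ≤ a) (h : ∑' i, ENNReal.ofReal (f i) = ENNReal.ofReal a) : HasSum f a := by
  have hsum := ENNReal.hasSum_toReal (h ▸ ENNReal.ofReal_ne_top)
  rw [← ENNReal.tsum_toReal_eq fun _ => ENNReal.ofReal_ne_top, h, ENNReal.toReal_ofReal ha] at hsum
  simpa [ENNReal.toReal_ofReal (hf _)] using hsum

-- Truncated subtraction makes the condition `x > y` of a symmetric valley automatic.
def valleyDepth (x y z : ℕ) : ℕ := if x = z then x - y else 0

theorem valleyDepth_ne_zero_iff {x y z : ℕ} : valleyDepth x y z ≠ 0 ↔ x = z ∧ y < x := by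
  unfold valleyDepth
  split_ifs <;> omega

theorem dsvL_eq_sum_valleyDepth (L : List ℕ) :
    dsvL L = ∑ i ∈ range (L.length - 2),
      valleyDepth (L.getD i 0) (L.getD (i + 1) 0) (L.getD (i + 2) 0) := by
  rw [dsvL, symValleyIdx, sum_filter,
    ← sum_subset (range_subset_range.2 (Nat.sub_le _ 2)) fun i _ hi => if_neg ?_]
  · refine sum_congr rfl fun i hi => ?_
    have : i + 2 < L.length := by have := mem_range.1 hi; omega
    simp only [valleyDepth]
    split_ifs <;> omega
  · have := mem_range.not.1 hi; omega

def windowEmb {n : ℕ} (i : Fin (n - 2)) : Fin 3 ↪ Fin n :=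
  (Fin.natAddEmb i).trans (Fin.castLEEmb (by omega))

theorem dsvL_ofFn {n : ℕ} (v : Fin n → ℕ) :
    dsvL (List.ofFn v) = ∑ i : Fin (n - 2),
      valleyDepth (v (windowEmb i 0)) (v (windowEmb i 1)) (v (windowEmb i 2)) := by
  rw [dsvL_eq_sum_valleyDepth, List.length_ofFn, ← Fin.sum_univ_eq_sum_range]
  refine sum_congr rfl fun i _ => ?_
  have : (i : ℕ) + 2 < n := by omega
  simp [windowEmb, Fin.castLE, Fin.natAdd, this, show (i : ℕ) < n by omega,
    show (i : ℕ) + 1 < n by omega]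

theorem tsum_prod_mul_dsvL {f : ℕ+ → ℝ≥0∞} (hf : ∑' k, f k = 1) (n : ℕ) :
    ∑' w : Fin n → ℕ+, (∏ j, f (w j)) * (dsvL (List.ofFn fun i => (w i : ℕ)) : ℝ≥0∞)
      = (n - 2 : ℕ) * ∑' u : Fin 3 → ℕ+, (∏ k, f (u k)) * valleyDepth (u 0) (u 1) (u 2) := by
  simp_rw [dsvL_ofFn, Nat.cast_sum, mul_sum]
  rw [Summable.tsum_finsetSum fun _ _ => ENNReal.summable]
  calc _ = ∑ _i : Fin (n - 2), ∑' u : Fin 3 → ℕ+, (∏ k, f (u k)) * valleyDepth (u 0) (u 1) (u 2) :=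
        sum_congr rfl fun i _ => ENNReal.tsum_pi_prod_mul_comp_embedding hf (windowEmb i)
          fun u => valleyDepth (u 0) (u 1) (u 2)
    _ = _ := by rw [sum_const, card_univ, Fintype.card_fin, nsmul_eq_mul]

noncomputable def letterProb (p q : ℝ) (k : ℕ+) : ℝ≥0∞ := ENNReal.ofReal (p * q ^ ((k : ℕ) - 1))

theorem wordP_nonneg {p q : ℝ} (hp : 0 ≤ p) (hq : 0 ≤ q) {n : ℕ} (w : Fin n → ℕ+) :
    0 ≤ wordP p q w :=
  prod_nonneg fun _ _ => mul_nonneg hp (pow_nonneg hq _)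

theorem ofReal_wordP_s19 {p q : ℝ} (hp : 0 ≤ p) (hq : 0 ≤ q) {n : ℕ} (w : Fin n → ℕ+) :
    ENNReal.ofReal (wordP p q w) = ∏ i, letterProb p q (w i) :=
  ENNReal.ofReal_prod_of_nonneg fun _ _ => mul_nonneg hp (pow_nonneg hq _)

theorem tsum_letterProb {p : ℝ} (hp : 0 < p) (hp1 : p ≤ 1) :
    ∑' k, letterProb p (1 - p) k = 1 := by
  have hgeom := (hasSum_geometric_of_lt_one (r := 1 - p) (by linarith) (by linarith)).mul_left p
  rw [sub_sub_cancel, mul_inv_cancel₀ hp.ne'] at hgeom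
  unfold letterProb
  rw [tsum_pnat_eq_tsum_succ (f := fun m => ENNReal.ofReal (p * (1 - p) ^ (m - 1)))]
  simpa using ENNReal.tsum_ofReal_eq_of_hasSum
    (fun m => mul_nonneg hp.le (pow_nonneg (by linarith) m)) hgeom

theorem tsum_letterProb_mul_valleyDepth {p q : ℝ} (hp : 0 ≤ p) (hq0 : 0 ≤ q) (hq1 : q < 1) :
    ∑' u : Fin 3 → ℕ+, (∏ k, letterProb p q (u k)) * valleyDepth (u 0) (u 1) (u 2)
      = ENNReal.ofReal (p ^ 3 * q ^ 2 / ((1 - q ^ 2) ^ 2 * (1 - q ^ 3))) := by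
  let φ : ℕ × ℕ → Fin 3 → ℕ+ := fun yd =>
    ![(yd.1 + yd.2).succPNat, yd.1.succPNat, (yd.1 + yd.2).succPNat]
  have hφ : Function.Injective φ := by
    rintro ⟨y, d⟩ ⟨y', d'⟩ h
    have h0 : y + d = y' + d' := Nat.succPNat_inj.1 (congrFun h 0)
    have h1 : y = y' := Nat.succPNat_inj.1 (congrFun h 1)
    simp only [Prod.mk.injEq]
    omega
  have hsupp : Function.support (fun u : Fin 3 → ℕ+ =>
      (∏ k, letterProb p q (u k)) * (valleyDepth (u 0) (u 1) (u 2) : ℝ≥0∞)) ⊆ Set.range φ := by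
    intro u hu
    obtain ⟨h02, h10⟩ : (u 0 : ℕ) = u 2 ∧ (u 1 : ℕ) < u 0 :=
      valleyDepth_ne_zero_iff.1 (by simpa using right_ne_zero_of_mul hu)
    refine ⟨((u 1 : ℕ) - 1, (u 0 : ℕ) - u 1), funext fun k => ?_⟩
    have := (u 1).pos
    fin_cases k <;> apply PNat.eq <;>
      simp only [φ, Fin.isValue, Fin.zero_eta, Fin.mk_one, Fin.reduceFinMk, Matrix.cons_val_zero,
        Matrix.cons_val_one, Matrix.cons_val, Nat.succPNat_coe] <;> omega
  have hterm (y d : ℕ) : (∏ k, letterProb p q (φ (y, d) k)) *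
      (valleyDepth (φ (y, d) 0) (φ (y, d) 1) (φ (y, d) 2) : ℝ≥0∞)
      = ENNReal.ofReal (p ^ 3 * (q ^ 3) ^ y) * ENNReal.ofReal (d * (q ^ 2) ^ d) := by
    have hdepth : valleyDepth (y + d + 1) (y + 1) (y + d + 1) = d := by simp [valleyDepth]
    simp only [φ, letterProb, Fin.prod_univ_three, Fin.isValue, Matrix.cons_val_zero,
      Matrix.cons_val_one, Matrix.cons_val, Nat.succPNat_coe, Nat.succ_eq_add_one,
      add_tsub_cancel_right, hdepth]
    rw [← ENNReal.ofReal_natCast, ← ENNReal.ofReal_mul, ← ENNReal.ofReal_mul, ← ENNReal.ofReal_mul,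
      ← ENNReal.ofReal_mul]
    all_goals first | positivity | (congr 1; ring)
  have hq3 : q ^ 3 < 1 := pow_lt_one₀ hq0 hq1 (by norm_num)
  have hq2 : ‖q ^ 2‖ < 1 := by
    rw [Real.norm_of_nonneg (by positivity)]
    exact pow_lt_one₀ hq0 hq1 (by norm_num)
  rw [← hφ.tsum_eq hsupp, ENNReal.tsum_prod']
  simp_rw [hterm, ENNReal.tsum_mul_left, ENNReal.tsum_mul_right]
  rw [ENNReal.tsum_ofReal_eq_of_hasSum (fun y => by positivity)
      ((hasSum_geometric_of_lt_one (by positivity) hq3).mul_left (p ^ 3)),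
    ENNReal.tsum_ofReal_eq_of_hasSum (fun d => by positivity)
      (hasSum_coe_mul_geometric_of_norm_lt_one hq2),
    ← ENNReal.ofReal_mul (mul_nonneg (by positivity) (inv_nonneg.2 (by linarith)))]
  congr 1
  field_simp

/-- For `0 < p ≤ 1`, `q = 1 − p`, and `n ≥ 2`, the expected value of the sum of depths
of symmetric valleys in a sample of `n` geometric random variables is
`q(p/(1−q³) − 1/(1+q)²)(n−2)`; the sum over all words converges (absolutely, as all
terms are nonnegative). -/
theorem expected_depths_symmetric_valleys (p q : ℝ) (hp : 0 < p) (hp1 : p ≤ 1)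
    (hq : q = 1 - p) (n : ℕ) (hn : 2 ≤ n) :
    Summable (fun w : Fin n → ℕ+ =>
      wordP p q w * (dsvL (List.ofFn fun i => (w i : ℕ)) : ℝ)) ∧
    ∑' w : Fin n → ℕ+, wordP p q w * (dsvL (List.ofFn fun i => (w i : ℕ)) : ℝ)
      = q * (p / (1 - q ^ 3) - 1 / (1 + q) ^ 2) * ((n : ℝ) - 2) := by
  have hq0 : 0 ≤ q := by linarith
  have hq1 : q < 1 := by linarith
  have hq3 : 0 < 1 - q ^ 3 := sub_pos.2 (pow_lt_one₀ hq0 hq1 (by norm_num))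
  have hq2 : 0 < 1 - q ^ 2 := sub_pos.2 (pow_lt_one₀ hq0 hq1 (by norm_num))
  have hn2 : (0 : ℝ) ≤ n - 2 := by simpa using hn
  have hexp : ∑' w : Fin n → ℕ+,
      ENNReal.ofReal (wordP p q w * (dsvL (List.ofFn fun i => (w i : ℕ)) : ℝ))
        = ENNReal.ofReal ((n - 2) * (p ^ 3 * q ^ 2 / ((1 - q ^ 2) ^ 2 * (1 - q ^ 3)))) := by
    simp_rw [ENNReal.ofReal_mul (wordP_nonneg hp.le hq0 _), ofReal_wordP_s19 hp.le hq0,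
      ENNReal.ofReal_natCast]
    rw [tsum_prod_mul_dsvL (hq ▸ tsum_letterProb hp hp1),
      tsum_letterProb_mul_valleyDepth hp.le hq0 hq1, ← ENNReal.ofReal_natCast, Nat.cast_sub hn, Nat.cast_ofNat, ← ENNReal.ofReal_mul hn2]
  have hsum := hasSum_of_tsum_ofReal_eq_s19
    (fun w => mul_nonneg (wordP_nonneg hp.le hq0 w) (Nat.cast_nonneg _)) (by positivity) hexp
  have hconst : p ^ 3 * q ^ 2 / ((1 - q ^ 2) ^ 2 * (1 - q ^ 3))
      = q * (p / (1 - q ^ 3) - 1 / (1 + q) ^ 2) := by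
    subst hq
    field_simp
    ring
  rw [hconst, mul_comm] at hsum
  exact ⟨hsum.summable, hsum.tsum_eq⟩
end
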